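/- Let D_x be the derivation with D_x(y_k) = y_{k+1} on polynomials in y3,...,y7. Define R5 = 3*y3*y5 - 5*y4^2, R6 = 9*y3^2*y6 - 45*y3*y4*y5 + 40*y4^3, and R7 = 9*y3^3*y7 - 63*y3^2*y4*y6 + 105*y3*y4^2*y5 - 35*y4^4. Then y3*D_x(R6) - 4*y4*R6 = R7 - 5*R5^2. -/
import Mathlib

/-- The identity `∇₁₂ R₆ = R₇ − 5 R₅²` for the weight-12 relative invariant derivation
`∇₁₂ = y₃ D_x − 4 y₄`, where `D_x` is any derivation with `D_x yₖ = y_{k+1}`. -/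
theorem nabla12_R6 {A : Type*} [CommRing A] [Algebra ℚ A] (D : Derivation ℚ A A)
    (y3 y4 y5 y6 y7 : A) (h3 : D y3 = y4) (h4 : D y4 = y5) (h5 : D y5 = y6)
    (h6 : D y6 = y7) :
    y3 * D (9 * y3 ^ 2 * y6 - 45 * y3 * y4 * y5 + 40 * y4 ^ 3)
      - 4 * y4 * (9 * y3 ^ 2 * y6 - 45 * y3 * y4 * y5 + 40 * y4 ^ 3)
      = (9 * y3 ^ 3 * y7 - 63 * y3 ^ 2 * y4 * y6 + 105 * y3 * y4 ^ 2 * y5 - 35 * y4 ^ 4)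
        - 5 * (3 * y3 * y5 - 5 * y4 ^ 2) ^ 2 := by
  have d9 : D (9:A) = 0 := by have := D.map_natCast (R := ℚ) 9; rwa [Nat.cast_ofNat] at this
  have d40 : D (40:A) = 0 := by have := D.map_natCast (R := ℚ) 40; rwa [Nat.cast_ofNat] at this
  have d45 : D (45:A) = 0 := by have := D.map_natCast (R := ℚ) 45; rwa [Nat.cast_ofNat] at this
  simp [Derivation.leibniz, h3, h4, h5, h6, d9, d40, d45]
  ring
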